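/- arXiv:2109.04671 — 2 statements merged into one kernel-verified Lean document; each statement's English description precedes it below -/
import Mathlib

section
/- Let m ≥ 2, let K ∈ ℝ^{m×m} be symmetric with K 1_m = 0_m, K positive semi-definite, and let η ∈ ℝ^m with η_i > −1 for all i. Then for every j ∈ {1,…,m} and every t > −1 − η_j, ∫_{Δ_{−m}°} x_j^t · exp(−(1/2) L(x)^⊤ K L(x) + η^⊤ L(x)) dx < ∞, where x_m := 1 − Σ_{i=1}^{m−1} x_i and L(x) = (log x_1, …, log x_{m−1}, log x_m). In particular, the moment generating function of log X_j under the corresponding density is finite in a neighborhood of 0. -/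
open MeasureTheory Matrix Finset

/-- The open simplex `Δ_{-m}°` in `ℝ^n` (where `m = n+1`). -/
def simplexInt (n : ℕ) : Set (Fin n → ℝ) :=
  {x | (∀ i, 0 < x i) ∧ ∑ i, x i < 1}

/-- Profile the last coordinate: send `x ∈ ℝ^n` to `(x, 1 - ∑ x) ∈ ℝ^{n+1}`. -/
noncomputable def fullVec {n : ℕ} (x : Fin n → ℝ) : Fin (n + 1) → ℝ :=
  Fin.snoc x (1 - ∑ i, x i)

/-- Componentwise logarithm. -/
noncomputable def logVec {n : ℕ} (x : Fin n → ℝ) : Fin n → ℝ :=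
  fun i => Real.log (x i)

/-!
Since `K` is positive semidefinite, the Gaussian factor `exp (-½ Lᵀ K L)` is at most `1`, so the
integrand is dominated by the Dirichlet kernel `∏ i, x_i ^ β_i` with `β = η + t • e_j`, all of whose
exponents exceed `-1`. The open simplex is covered by the `n + 1` pieces on which some coordinate
`x_k` is at least `1 / (n + 1)`. On such a piece `x_k ^ β_k` is bounded and the other coordinates
lie in `(0, 1)`, where `∏ x_i ^ β_i` is a product of one-variable integrable functions. The
volume-preserving affine map exchanging `x_k` with `x_{n+1} = 1 - ∑ x_i` reduces every piece to
the case `k = n + 1`.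
-/

lemma Real.rpow_le_max_of_le_of_le_one {c s b : ℝ} (hc : 0 < c) (hcs : c ≤ s) (hs : s ≤ 1) :
    s ^ b ≤ max (c ^ b) 1 := by
  rcases le_or_gt 0 b with hb | hb
  · exact (Real.rpow_le_one (hc.le.trans hcs) hs hb).trans (le_max_right _ _)
  · exact (Real.rpow_le_rpow_of_nonpos hc hcs hb.le).trans (le_max_left _ _)

lemma Real.prod_rpow_add_single {ι : Type*} [Fintype ι] [DecidableEq ι] {y : ι → ℝ}
    (hy : ∀ i, 0 < y i) (η : ι → ℝ) (j : ι) (t : ℝ) :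
    ∏ i, y i ^ (η + Pi.single j t : ι → ℝ) i = y j ^ t * ∏ i, y i ^ η i := by
  have hsplit : ∀ i, y i ^ (η + Pi.single j t : ι → ℝ) i =
      y i ^ η i * y i ^ (Pi.single j t : ι → ℝ) i :=
    fun i => by rw [Pi.add_apply, Real.rpow_add (hy i)]
  rw [prod_congr rfl fun i _ => hsplit i, prod_mul_distrib, mul_comm]
  congr 1
  rw [Fintype.prod_eq_single j fun i hi => by simp [hi], Pi.single_eq_same]

lemma exp_dotProduct_logVec {m : ℕ} {y : Fin m → ℝ} (hy : ∀ i, 0 < y i) (η : Fin m → ℝ) :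
    Real.exp (η ⬝ᵥ logVec y) = ∏ i, y i ^ η i := by
  simp only [dotProduct, logVec, Real.exp_sum]
  exact prod_congr rfl fun i _ => by rw [Real.rpow_def_of_pos (hy i), mul_comm]

lemma integrableOn_prod_rpow_pi_Ioo {ι : Type*} [Fintype ι] {γ : ι → ℝ} (hγ : ∀ i, -1 < γ i) :
    IntegrableOn (fun x : ι → ℝ => ∏ i, x i ^ γ i) (Set.univ.pi fun _ => Set.Ioo 0 1) := by
  rw [IntegrableOn, volume_pi, Measure.restrict_pi_pi]
  exact Integrable.fintype_prod fun i =>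
    (intervalIntegral.integrableOn_Ioo_rpow_iff one_pos).2 (hγ i)

section Simplex

variable {n : ℕ}

@[simp]
lemma fullVec_castSucc (x : Fin n → ℝ) (i : Fin n) : fullVec x i.castSucc = x i :=
  Fin.snoc_castSucc ..

@[simp]
lemma fullVec_last (x : Fin n → ℝ) : fullVec x (Fin.last n) = 1 - ∑ i, x i :=
  Fin.snoc_last ..

lemma sum_fullVec (x : Fin n → ℝ) : ∑ i, fullVec x i = 1 := by
  simp [Fin.sum_univ_castSucc]

lemma fullVec_injective : Function.Injective (fullVec (n := n)) := fun x y h =>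
  funext fun i => by simpa using congrFun h i.castSucc

@[fun_prop]
lemma continuous_fullVec_apply (i : Fin (n + 1)) :
    Continuous fun x : Fin n → ℝ => fullVec x i := by
  induction i using Fin.lastCases <;> simp only [fullVec_last, fullVec_castSucc] <;> fun_prop

lemma mem_simplexInt_iff {x : Fin n → ℝ} : x ∈ simplexInt n ↔ ∀ i, 0 < fullVec x i := by
  simp [simplexInt, Fin.forall_fin_succ']

lemma isOpen_simplexInt : IsOpen (simplexInt n) := by
  have h : simplexInt n = ⋂ i, {x | 0 < fullVec x i} := by ext; simp [mem_simplexInt_iff]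
  rw [h]
  exact isOpen_iInter_of_finite fun i => isOpen_lt continuous_const (continuous_fullVec_apply i)

lemma measurableSet_simplexInt_sep_le_fullVec (c : ℝ) (k : Fin (n + 1)) :
    MeasurableSet {x ∈ simplexInt n | c ≤ fullVec x k} :=
  isOpen_simplexInt.measurableSet.inter
    (measurableSet_le measurable_const (continuous_fullVec_apply k).measurable)

lemma fullVec_le_one {x : Fin n → ℝ} (hx : x ∈ simplexInt n) (i : Fin (n + 1)) :
    fullVec x i ≤ 1 :=
  sum_fullVec x ▸ single_le_sum (fun j _ => (mem_simplexInt_iff.1 hx j).le) (mem_univ i)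

lemma simplexInt_subset_pi_Ioo : simplexInt n ⊆ Set.univ.pi fun _ => Set.Ioo 0 1 := by
  intro x ⟨hpos, hsum⟩ i _
  exact ⟨hpos i, (single_le_sum (fun j _ => (hpos j).le) (mem_univ i)).trans_lt hsum⟩

lemma integrableOn_prod_fullVec_rpow_of_le_last {β : Fin (n + 1) → ℝ} (hβ : ∀ i, -1 < β i)
    {c : ℝ} (hc : 0 < c) :
    IntegrableOn (fun x => ∏ i, fullVec x i ^ β i)
      {x ∈ simplexInt n | c ≤ fullVec x (Fin.last n)} := by
  have hdom : IntegrableOn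
      (fun x : Fin n → ℝ => max (c ^ β (Fin.last n)) 1 * ∏ i, x i ^ β i.castSucc)
      {x ∈ simplexInt n | c ≤ fullVec x (Fin.last n)} :=
    ((integrableOn_prod_rpow_pi_Ioo fun i => hβ _).mono_set
      ((Set.sep_subset _ _).trans simplexInt_subset_pi_Ioo)).const_mul _
  have hmeas : Measurable fun x => ∏ i, fullVec x i ^ β i := by fun_prop
  refine hdom.mono' hmeas.aestronglyMeasurable ?_
  filter_upwards [ae_restrict_mem (measurableSet_simplexInt_sep_le_fullVec c _)] with x ⟨hx, hcx⟩
  have hprod : 0 ≤ ∏ i : Fin n, x i ^ β i.castSucc :=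
    prod_nonneg fun i _ => Real.rpow_nonneg (hx.1 i).le _
  have hlast : fullVec x (Fin.last n) ^ β (Fin.last n) ≤ max (c ^ β (Fin.last n)) 1 :=
    Real.rpow_le_max_of_le_of_le_one hc hcx (fullVec_le_one hx _)
  simp only [Fin.prod_univ_castSucc, fullVec_castSucc]
  rw [Real.norm_of_nonneg (mul_nonneg hprod (Real.rpow_nonneg (hc.le.trans hcx) _)), mul_comm]
  exact mul_le_mul_of_nonneg_right hlast hprod

noncomputable def swapLast (k : Fin n) (x : Fin n → ℝ) : Fin n → ℝ :=
  Function.update x k (1 - ∑ i, x i)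

lemma sum_swapLast (k : Fin n) (x : Fin n → ℝ) : ∑ i, swapLast k x i = 1 - x k := by
  rw [swapLast, sum_update_of_mem (mem_univ k),
    sum_eq_add_sum_sdiff_singleton_of_mem (mem_univ k) x]
  ring

lemma fullVec_swapLast (k : Fin n) (x : Fin n → ℝ) :
    fullVec (swapLast k x) = fullVec x ∘ Equiv.swap k.castSucc (Fin.last n) := by
  ext i
  induction i using Fin.lastCases with
  | last => simp [sum_swapLast]
  | cast i =>
    rcases eq_or_ne i k with rfl | hik
    · simp [swapLast]
    · rw [Function.comp_apply, Equiv.swap_apply_of_ne_of_ne (by simpa using hik)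
        (Fin.castSucc_lt_last i).ne]
      simp [swapLast, hik]

lemma swapLast_involutive (k : Fin n) : Function.Involutive (swapLast k) := fun x =>
  fullVec_injective <| by simp [fullVec_swapLast, Function.comp_def]

lemma swapLast_mem_simplexInt_iff (k : Fin n) {x : Fin n → ℝ} :
    swapLast k x ∈ simplexInt n ↔ x ∈ simplexInt n := by
  simp only [mem_simplexInt_iff, fullVec_swapLast, Function.comp_apply]
  exact (Equiv.swap k.castSucc (Fin.last n)).forall_congr_right (q := fun i => 0 < fullVec x i)

lemma swapLast_eq_single_add_toLin' (k : Fin n) :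
    swapLast k = (Pi.single k 1 + ·) ∘ Matrix.toLin' (Matrix.updateRow 1 k fun _ => -1) := by
  ext x i
  rcases eq_or_ne i k with rfl | hik
  · simp [swapLast, Matrix.mulVec, dotProduct, sub_eq_add_neg]
  · simp [swapLast, hik, Matrix.mulVec, dotProduct, Matrix.one_apply]

lemma measurePreserving_swapLast (k : Fin n) : MeasurePreserving (swapLast k) := by
  set M : Matrix (Fin n) (Fin n) ℝ := Matrix.updateRow 1 k fun _ => -1
  have hdet : M.det = -1 := by
    convert Matrix.det_updateRow_sum (1 : Matrix (Fin n) (Fin n) ℝ) k fun _ => -1 using 3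
    · ext j; simp [Matrix.one_apply]
    · simp
  have hM : MeasurePreserving (Matrix.toLin' M) :=
    ⟨(Matrix.toLin' M).continuous_of_finiteDimensional.measurable, by
      rw [Real.map_matrix_volume_pi_eq_smul_volume_pi (by simp [hdet]), hdet]; simp⟩
  rw [swapLast_eq_single_add_toLin']
  exact (measurePreserving_add_left volume _).comp hM

lemma measurableEmbedding_swapLast (k : Fin n) : MeasurableEmbedding (swapLast k) :=
  (MeasurableEquiv.ofInvolutive _ (swapLast_involutive k)
    (measurePreserving_swapLast k).measurable).measurableEmbedding

lemma integrableOn_prod_fullVec_rpow_of_le {β : Fin (n + 1) → ℝ} (hβ : ∀ i, -1 < β i)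
    {c : ℝ} (hc : 0 < c) (k : Fin (n + 1)) :
    IntegrableOn (fun x => ∏ i, fullVec x i ^ β i) {x ∈ simplexInt n | c ≤ fullVec x k} := by
  induction k using Fin.lastCases with
  | last => exact integrableOn_prod_fullVec_rpow_of_le_last hβ hc
  | cast k =>
    set σ := Equiv.swap k.castSucc (Fin.last n)
    have hpre : swapLast k ⁻¹' {x ∈ simplexInt n | c ≤ fullVec x k.castSucc} =
        {x ∈ simplexInt n | c ≤ fullVec x (Fin.last n)} := by
      ext x
      simp only [Set.mem_preimage, Set.mem_ofPred_eq, swapLast_mem_simplexInt_iff,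
        fullVec_swapLast, Function.comp_apply, Equiv.swap_apply_left]
    have hcomp : (fun x => ∏ i, fullVec x i ^ β i) ∘ swapLast k =
        fun x => ∏ i, fullVec x i ^ (β ∘ σ) i := by
      ext x
      simp only [Function.comp_apply, fullVec_swapLast]
      exact (Fintype.prod_equiv σ _ _ fun i => by simp [σ]).symm
    rw [← (measurePreserving_swapLast k).integrableOn_comp_preimage
      (measurableEmbedding_swapLast k), hpre, hcomp]
    exact integrableOn_prod_fullVec_rpow_of_le_last (fun i => hβ _) hc

theorem integrableOn_prod_fullVec_rpow {β : Fin (n + 1) → ℝ} (hβ : ∀ i, -1 < β i) :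
    IntegrableOn (fun x => ∏ i, fullVec x i ^ β i) (simplexInt n) := by
  have hcover : simplexInt n ⊆ ⋃ k, {x ∈ simplexInt n | (n + 1 : ℝ)⁻¹ ≤ fullVec x k} := by
    intro x hx
    have hsum : ∑ _k : Fin (n + 1), (n + 1 : ℝ)⁻¹ ≤ ∑ k, fullVec x k := by
      simp [sum_fullVec, mul_inv_cancel₀ (n.cast_add_one_ne_zero : (n : ℝ) + 1 ≠ 0)]
    obtain ⟨k, -, hk⟩ := exists_le_of_sum_le univ_nonempty hsum
    exact Set.mem_iUnion.2 ⟨k, hx, hk⟩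
  exact (integrableOn_finite_iUnion.2 fun k =>
    integrableOn_prod_fullVec_rpow_of_le hβ (by positivity) k).mono_set hcover

end Simplex

theorem loglog_moments_finite_posSemidef_general (n : ℕ)
    (K : Matrix (Fin (n + 1)) (Fin (n + 1)) ℝ)
    (hpsd : K.PosSemidef)
    (η : Fin (n + 1) → ℝ) (hη : ∀ i, -1 < η i)
    (j : Fin (n + 1)) (t : ℝ) (ht : -1 - η j < t) :
    IntegrableOn (fun x : Fin n → ℝ =>
      fullVec x j ^ t *
        Real.exp (-(1 / 2) * (logVec (fullVec x) ⬝ᵥ K.mulVec (logVec (fullVec x)))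
          + η ⬝ᵥ logVec (fullVec x))) (simplexInt n) := by
  have hβ : ∀ i, -1 < (η + Pi.single j t : Fin (n + 1) → ℝ) i := by
    intro i
    rcases eq_or_ne i j with rfl | hij
    · simp only [Pi.add_apply, Pi.single_eq_same]; linarith
    · simpa [hij] using hη i
  have hmeas : Measurable fun x : Fin n → ℝ => fullVec x j ^ t *
      Real.exp (-(1 / 2) * (logVec (fullVec x) ⬝ᵥ K.mulVec (logVec (fullVec x)))
        + η ⬝ᵥ logVec (fullVec x)) := by
    simp only [logVec, dotProduct, mulVec]
    fun_prop
  refine (integrableOn_prod_fullVec_rpow hβ).mono' hmeas.aestronglyMeasurable ?_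
  filter_upwards [ae_restrict_mem isOpen_simplexInt.measurableSet] with x hx
  have hpos := mem_simplexInt_iff.1 hx
  have hquad := hpsd.dotProduct_mulVec_nonneg (logVec (fullVec x))
  rw [star_trivial] at hquad
  rw [Real.norm_of_nonneg (mul_nonneg (Real.rpow_nonneg (hpos j).le _) (Real.exp_nonneg _)),
    Real.prod_rpow_add_single hpos, ← exp_dotProduct_logVec hpos]
  exact mul_le_mul_of_nonneg_left (Real.exp_le_exp.2 (by linarith))
    (Real.rpow_nonneg (hpos j).le _)

/-- Under condition (III) of Theorem 4.3 (`K 1 = 0`, `K ⪰ 0`, `η ≻ -1`), the moment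
`E[X_j^t]` of the log–log model is finite for every `t > -1 - η_j`. -/
theorem loglog_moments_finite_posSemidef (n : ℕ) (hn : 1 ≤ n)
    (K : Matrix (Fin (n + 1)) (Fin (n + 1)) ℝ) (hK : K.IsSymm)
    (h1 : K.mulVec (fun _ => 1) = 0) (hpsd : K.PosSemidef)
    (η : Fin (n + 1) → ℝ) (hη : ∀ i, -1 < η i)
    (j : Fin (n + 1)) (t : ℝ) (ht : -1 - η j < t) :
    IntegrableOn (fun x : Fin n → ℝ =>
      fullVec x j ^ t *
        Real.exp (-(1 / 2) * (logVec (fullVec x) ⬝ᵥ K.mulVec (logVec (fullVec x)))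
          + η ⬝ᵥ logVec (fullVec x))) (simplexInt n) :=
  loglog_moments_finite_posSemidef_general n K hpsd η hη j t ht
end

section
/- Let m ≥ 2, let K ∈ ℝ^{m×m} be symmetric with K 1_m = 0_m, and let η ∈ ℝ^m. Then, as an identity of (possibly infinite) values in [0, ∞], ∫_{Δ_{−m}°} exp(−(1/2) L(x)^⊤ K L(x) + η^⊤ L(x)) dx = ∫_{ℝ^{m−1}} exp(−(1/2) y^⊤ K_{−m,−m} y + (η_{−m} + 1_{m−1})^⊤ y − (1_m^⊤ η + m) · log(1 + Σ_{k=1}^{m−1} e^{y_k})) dy, where L(x) = (log x_1, …, log x_{m−1}, log(1 − Σ_{j=1}^{m−1} x_j)). That is, the additive log-ratio transformation y_j = log(x_j / x_m) carries the log–log simplex kernel to the stated kernel on ℝ^{m−1}. -/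
open MeasureTheory Matrix Finset

/-!
The inverse additive log-ratio map `p(y) = exp y / (1 + ∑ₖ exp yₖ)` is a diffeomorphism of
`ℝⁿ` onto the open simplex. Its Jacobian matrix is `diag p * (1 - 1 pᵀ)`, whose determinant
`∏ᵢ pᵢ * (1 - ∑ᵢ pᵢ)` is the product of all `n + 1` coordinates of the completed point
`(p, 1 - ∑ p)`, i.e. `exp` of the sum of their logarithms. These logarithms are
`(y, 0) - log (1 + ∑ₖ exp yₖ) • 1`; the constant shift does not change the quadratic form because
`K` is symmetric with `K 1 = 0`, so the change of variables formula gives the identity.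
-/

section QuadraticForm

variable {ι R : Type*} [Fintype ι] [CommRing R]

theorem dotProduct_mulVec_sub_const {K : Matrix ι ι R} (hK : K.IsSymm)
    (h1 : K.mulVec (fun _ => 1) = 0) (w : ι → R) (c : R) :
    (fun j => w j - c) ⬝ᵥ K.mulVec (fun j => w j - c) = w ⬝ᵥ K.mulVec w := by
  have hw : (fun j => w j - c) = w - c • (fun _ => (1 : R)) := by
    funext j; simp
  have h1' : (fun _ => (1 : R)) ᵥ* K = 0 := by
    rw [← hK.eq, vecMul_transpose, h1]
  rw [hw, mulVec_sub, mulVec_smul, h1, smul_zero, sub_zero, sub_dotProduct, smul_dotProduct,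
    dotProduct_mulVec (fun _ => (1 : R)) K w, h1', zero_dotProduct, smul_zero, sub_zero]

theorem snoc_zero_dotProduct_mulVec_snoc_zero {n : ℕ} (K : Matrix (Fin (n + 1)) (Fin (n + 1)) R)
    (y : Fin n → R) :
    (Fin.snoc y 0 : Fin (n + 1) → R) ⬝ᵥ K.mulVec (Fin.snoc y 0) =
      y ⬝ᵥ (K.submatrix Fin.castSucc Fin.castSucc).mulVec y := by
  simp [dotProduct, mulVec, Fin.sum_univ_castSucc]

end QuadraticForm

noncomputable section

variable {n : ℕ}

def alrDenom (y : Fin n → ℝ) : ℝ := 1 + ∑ k, Real.exp (y k)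

def alrInv (y : Fin n → ℝ) : Fin n → ℝ := fun i => Real.exp (y i) / alrDenom y

def alr (x : Fin n → ℝ) : Fin n → ℝ := fun i => Real.log (x i / (1 - ∑ j, x j))

lemma alrDenom_pos (y : Fin n → ℝ) : 0 < alrDenom y := by
  unfold alrDenom; positivity

lemma alrInv_pos (y : Fin n → ℝ) (i : Fin n) : 0 < alrInv y i :=
  div_pos (Real.exp_pos _) (alrDenom_pos y)

lemma one_sub_sum_alrInv (y : Fin n → ℝ) : 1 - ∑ i, alrInv y i = (alrDenom y)⁻¹ := by
  have hS := (alrDenom_pos y).ne'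
  simp only [alrInv, ← Finset.sum_div]
  field_simp
  simp only [alrDenom]; ring

lemma fullVec_alrInv (y : Fin n → ℝ) :
    fullVec (alrInv y) = fun j => Real.exp ((Fin.snoc y 0 : Fin (n + 1) → ℝ) j) / alrDenom y := by
  funext j
  refine Fin.lastCases ?_ (fun i => ?_) j
  · simp [fullVec, one_sub_sum_alrInv]
  · simp [fullVec, alrInv]

lemma logVec_fullVec_alrInv (y : Fin n → ℝ) :
    logVec (fullVec (alrInv y)) =
      fun j => (Fin.snoc y 0 : Fin (n + 1) → ℝ) j - Real.log (alrDenom y) := by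
  funext j
  rw [logVec, fullVec_alrInv, Real.log_div (Real.exp_ne_zero _) (alrDenom_pos y).ne',
    Real.log_exp]

lemma alrInv_mem_simplexInt (y : Fin n → ℝ) : alrInv y ∈ simplexInt n := by
  refine ⟨alrInv_pos y, ?_⟩
  have := one_sub_sum_alrInv y ▸ inv_pos.2 (alrDenom_pos y)
  linarith

lemma alr_alrInv (y : Fin n → ℝ) : alr (alrInv y) = y := by
  funext i
  rw [alr, one_sub_sum_alrInv, alrInv, div_inv_eq_mul, div_mul_cancel₀ _ (alrDenom_pos y).ne',
    Real.log_exp]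

lemma alrInv_alr {x : Fin n → ℝ} (hx : x ∈ simplexInt n) : alrInv (alr x) = x := by
  obtain ⟨hpos, hsum⟩ := hx
  have ht : 0 < 1 - ∑ j, x j := by linarith
  have hexp : ∀ i, Real.exp (alr x i) = x i / (1 - ∑ j, x j) := fun i =>
    Real.exp_log (div_pos (hpos i) ht)
  have hden : alrDenom (alr x) = (1 - ∑ j, x j)⁻¹ := by
    simp only [alrDenom, hexp, ← Finset.sum_div]
    field_simp
    ring
  funext i
  rw [alrInv, hexp, hden]
  field_simp

lemma alrInv_injective : Function.Injective (alrInv (n := n)) :=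
  Function.LeftInverse.injective alr_alrInv

lemma range_alrInv : Set.range (alrInv (n := n)) = simplexInt n :=
  Set.Subset.antisymm (Set.range_subset_iff.2 alrInv_mem_simplexInt)
    fun x hx => ⟨alr x, alrInv_alr hx⟩

/-- Factored as `diag p * (1 - 1 pᵀ)` so that the matrix determinant lemma applies. -/
def alrInvJac (y : Fin n → ℝ) : Matrix (Fin n) (Fin n) ℝ :=
  diagonal (alrInv y) *
    (1 + replicateCol Unit (fun _ => (1 : ℝ)) * replicateRow Unit (-alrInv y))

lemma det_alrInvJac (y : Fin n → ℝ) : (alrInvJac y).det = ∏ j, fullVec (alrInv y) j := by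
  rw [alrInvJac, det_mul, det_diagonal, det_one_add_replicateCol_mul_replicateRow,
    Fin.prod_univ_castSucc, fullVec, Fin.snoc_last]
  simp only [Fin.snoc_castSucc, dotProduct, mul_one, Pi.neg_apply, Finset.sum_neg_distrib]
  ring

lemma alrInvJac_mulVec (y v : Fin n → ℝ) (i : Fin n) :
    (alrInvJac y *ᵥ v) i = alrInv y i * (v i - ∑ j, alrInv y j * v j) := by
  rw [alrInvJac, ← mulVec_mulVec, mulVec_diagonal, add_mulVec, one_mulVec, ← mulVec_mulVec,
    replicateRow_mulVec_eq_const]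
  simp [mulVec, dotProduct, sub_eq_add_neg]

lemma alrInv_apply_eq_exp (y : Fin n → ℝ) (i : Fin n) :
    alrInv y i = Real.exp (y i - Real.log (alrDenom y)) := by
  rw [Real.exp_sub, Real.exp_log (alrDenom_pos y), alrInv]

lemma hasFDerivAt_alrDenom (y : Fin n → ℝ) :
    HasFDerivAt alrDenom
      (∑ k, Real.exp (y k) • ContinuousLinearMap.proj (R := ℝ) (φ := fun _ : Fin n => ℝ) k) y :=
  (HasFDerivAt.fun_sum fun k _ => (hasFDerivAt_apply k y).exp).const_add 1

lemma hasFDerivAt_alrInv (y : Fin n → ℝ) :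
    HasFDerivAt alrInv (LinearMap.toContinuousLinearMap (toLin' (alrInvJac y))) y := by
  refine hasFDerivAt_pi'.2 fun i => ?_
  have h := ((hasFDerivAt_apply i y).fun_sub
    ((hasFDerivAt_alrDenom y).log (alrDenom_pos y).ne')).exp
  simp only [← alrInv_apply_eq_exp] at h
  refine h.congr_fderiv (ContinuousLinearMap.ext fun v => ?_)
  simp [alrInvJac_mulVec, alrInv, Finset.mul_sum, div_eq_inv_mul, mul_assoc]

lemma fullVec_alrInv_pos (y : Fin n → ℝ) (j : Fin (n + 1)) : 0 < fullVec (alrInv y) j := by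
  rw [fullVec_alrInv]
  exact div_pos (Real.exp_pos _) (alrDenom_pos y)

theorem lintegral_simplexInt_eq_lintegral_alrInv (f : (Fin n → ℝ) → ENNReal) :
    ∫⁻ x in simplexInt n, f x =
      ∫⁻ y, ENNReal.ofReal (∏ j, fullVec (alrInv y) j) * f (alrInv y) := by
  have h := lintegral_image_eq_lintegral_abs_det_fderiv_mul volume MeasurableSet.univ
    (fun y _ => (hasFDerivAt_alrInv y).hasFDerivWithinAt) alrInv_injective.injOn f
  rw [Set.image_univ, range_alrInv, Measure.restrict_univ] at h
  rw [h]
  refine lintegral_congr fun y => ?_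
  rw [LinearMap.det_toContinuousLinearMap, LinearMap.det_toLin', det_alrInvJac,
    abs_of_pos (prod_pos fun j _ => fullVec_alrInv_pos y j)]

end

theorem alr_transform_integral_identity_general (n : ℕ)
    (K : Matrix (Fin (n + 1)) (Fin (n + 1)) ℝ) (hK : K.IsSymm)
    (h1 : K.mulVec (fun _ => 1) = 0) (η : Fin (n + 1) → ℝ) :
    ∫⁻ x in simplexInt n, ENNReal.ofReal
        (Real.exp (-(1 / 2) * (logVec (fullVec x) ⬝ᵥ K.mulVec (logVec (fullVec x)))
          + η ⬝ᵥ logVec (fullVec x)))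
    = ∫⁻ y : Fin n → ℝ, ENNReal.ofReal
        (Real.exp (-(1 / 2) * (y ⬝ᵥ (K.submatrix Fin.castSucc Fin.castSucc).mulVec y)
          + (∑ i, (η i.castSucc + 1) * y i)
          - ((∑ i, η i) + ((n : ℝ) + 1)) * Real.log (1 + ∑ k, Real.exp (y k)))) := by
  rw [lintegral_simplexInt_eq_lintegral_alrInv]
  refine lintegral_congr fun y => ?_
  have hjac : ∏ j, fullVec (alrInv y) j = Real.exp (∑ j, logVec (fullVec (alrInv y)) j) := by
    rw [Real.exp_sum]
    exact prod_congr rfl fun j _ => (Real.exp_log (fullVec_alrInv_pos y j)).symm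
  rw [hjac, ← ENNReal.ofReal_mul (Real.exp_nonneg _), ← Real.exp_add, logVec_fullVec_alrInv,
    dotProduct_mulVec_sub_const hK h1, snoc_zero_dotProduct_mulVec_snoc_zero]
  congr 2
  simp only [dotProduct, Fin.sum_univ_castSucc, Fin.snoc_castSucc, Fin.snoc_last, alrDenom,
    mul_sub, sum_sub_distrib, add_mul, sum_add_distrib, sum_const, card_univ, Fintype.card_fin,
    nsmul_eq_mul, one_mul, ← sum_mul]
  push_cast
  ring

/-- The additive log-ratio transformation carries the log–log simplex kernel to a kernel
on `ℝ^{m-1}`: an identity of (possibly infinite) Lebesgue integrals in `[0, ∞]`. -/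
theorem alr_transform_integral_identity (n : ℕ) (hn : 1 ≤ n)
    (K : Matrix (Fin (n + 1)) (Fin (n + 1)) ℝ) (hK : K.IsSymm)
    (h1 : K.mulVec (fun _ => 1) = 0) (η : Fin (n + 1) → ℝ) :
    ∫⁻ x in simplexInt n, ENNReal.ofReal
        (Real.exp (-(1 / 2) * (logVec (fullVec x) ⬝ᵥ K.mulVec (logVec (fullVec x)))
          + η ⬝ᵥ logVec (fullVec x)))
    = ∫⁻ y : Fin n → ℝ, ENNReal.ofReal
        (Real.exp (-(1 / 2) * (y ⬝ᵥ (K.submatrix Fin.castSucc Fin.castSucc).mulVec y)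
          + (∑ i, (η i.castSucc + 1) * y i)
          - ((∑ i, η i) + ((n : ℝ) + 1)) * Real.log (1 + ∑ k, Real.exp (y k)))) :=
  alr_transform_integral_identity_general n K hK h1 η
end
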